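/- arXiv:math/0509726 — 4 statements merged into one kernel-verified Lean document; each statement's English description precedes it below -/
import Mathlib

section
/- With Γ = Σ_{k=1}^∞ ρ_k² < ∞, w_k(ε) = ε²ν_k²/λ_k², and k_γ(ε) = max{ m : Σ_{k=1}^m (ρ_k² + w_k(ε)) ≤ Γ }, the following limit holds: lim_{ε→0} [ Σ_{k=1}^{k_γ(ε)} ε²ν_k²/λ_k² + Σ_{k=k_γ(ε)+1}^∞ ρ_k² ] = 0. -/
/-!
Every partial sum of `ρ_k²` lies strictly below `Γ`, and the perturbation `ε²ν_k²/λ_k²` of each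
term vanishes as `ε → 0`, so `k_γ(ε) → ∞`. The defining inequality of `k_γ(ε)` bounds
`∑_{k<k_γ} ε²ν_k²/λ_k²` by the tail `∑_{k ≥ k_γ} ρ_k²`, so the whole expression is at most twice
that tail, which tends to `0`.
-/

open Filter Topology Finset

theorem sum_range_lt_tsum_of_pos {a : ℕ → ℝ} (ha : Summable a) (hpos : ∀ k, 0 < a k) (m : ℕ) :
    ∑ k ∈ range m, a k < ∑' k, a k := by
  rw [← ha.sum_add_tsum_nat_add m]
  exact lt_add_of_pos_right _ <|
    ((summable_nat_add_iff m).2 ha).tsum_pos (fun k => (hpos _).le) 0 (hpos _)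

theorem tendsto_atTop_of_sum_range_add_le_tsum_imp_le {α : Type*} {l : Filter α} {a : ℕ → ℝ}
    {w : α → ℕ → ℝ} {K : α → ℕ} (ha : ∀ m, ∑ k ∈ range m, a k < ∑' k, a k)
    (hw : ∀ k, Tendsto (fun x => w x k) l (𝓝 0))
    (hK : ∀ᶠ x in l, ∀ m, ∑ k ∈ range m, (a k + w x k) ≤ ∑' k, a k → m ≤ K x) :
    Tendsto K l atTop := by
  refine tendsto_atTop.2 fun m => ?_
  have hlim : Tendsto (fun x => ∑ k ∈ range m, (a k + w x k)) l (𝓝 (∑ k ∈ range m, a k)) := by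
    simpa using tendsto_finsetSum (range m) fun k _ => (hw k).const_add (a k)
  filter_upwards [hK, hlim.eventually (gt_mem_nhds (ha m))] with x hKx hx
  exact hKx m hx.le

theorem sum_range_add_tsum_nat_add_le_two_mul {a b : ℕ → ℝ} (ha : Summable a) {n : ℕ}
    (h : ∑ k ∈ range n, (a k + b k) ≤ ∑' k, a k) :
    ∑ k ∈ range n, b k + ∑' k, a (n + k) ≤ 2 * ∑' k, a (n + k) := by
  have hsplit := ha.sum_add_tsum_nat_add n
  simp only [add_comm _ n] at hsplit
  rw [sum_add_distrib] at h
  linarith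

theorem stmt7_general (ρ ν lam : ℕ → ℝ)
    (hρ : ∀ k, 0 < ρ k)
    (hsum : Summable fun k => ρ k ^ 2)
    (kγ : ℝ → ℕ)
    (hkγ : ∀ ε > (0 : ℝ),
      (∑ k ∈ Finset.range (kγ ε), (ρ k ^ 2 + ε ^ 2 * ν k ^ 2 / lam k ^ 2) ≤ ∑' k, ρ k ^ 2) ∧
      (∀ m : ℕ,
        (∑ k ∈ Finset.range m, (ρ k ^ 2 + ε ^ 2 * ν k ^ 2 / lam k ^ 2) ≤ ∑' k, ρ k ^ 2) →
        m ≤ kγ ε)) :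
    Tendsto
      (fun ε => (∑ k ∈ Finset.range (kγ ε), ε ^ 2 * ν k ^ 2 / lam k ^ 2)
        + ∑' k : ℕ, ρ (kγ ε + k) ^ 2)
      (𝓝[>] (0 : ℝ)) (𝓝 0) := by
  have hkγ_eventually : ∀ᶠ ε in 𝓝[>] (0 : ℝ), _ := eventually_mem_nhdsWithin.mono hkγ
  have hkγ_top : Tendsto kγ (𝓝[>] 0) atTop := by
    refine tendsto_atTop_of_sum_range_add_le_tsum_imp_le
      (sum_range_lt_tsum_of_pos hsum fun k => pow_pos (hρ k) 2) (fun k => ?_)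
      (hkγ_eventually.mono fun ε h => h.2)
    have : Tendsto (fun ε : ℝ => ε ^ 2 * ν k ^ 2 / lam k ^ 2) (𝓝 0) (𝓝 0) := by
      simpa using ((continuous_pow 2).tendsto 0).mul_const (ν k ^ 2) |>.div_const (lam k ^ 2)
    exact this.mono_left nhdsWithin_le_nhds
  have htail : Tendsto (fun ε => ∑' k, ρ (kγ ε + k) ^ 2) (𝓝[>] 0) (𝓝 0) := by
    simpa only [add_comm (kγ _), Function.comp_def] using
      (tendsto_sum_nat_add fun k => ρ k ^ 2).comp hkγ_top
  refine tendsto_of_tendsto_of_tendsto_of_le_of_le' tendsto_const_nhds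
    (by simpa using htail.const_mul 2) (Eventually.of_forall fun ε => ?_)
    (hkγ_eventually.mono fun ε h => sum_range_add_tsum_nat_add_le_two_mul hsum h.1)
  exact add_nonneg (sum_nonneg fun k _ => by positivity) (tsum_nonneg fun k => sq_nonneg _)

/-- Lemma 3 ii): with `Γ = ∑ ρ_k² < ∞`, `w_k(ε) = ε²ν_k²/λ_k²` and
`k_γ(ε) = max { m : ∑_{k=1}^m (ρ_k² + w_k(ε)) ≤ Γ }`, one has
`∑_{k=1}^{k_γ(ε)} ε²ν_k²/λ_k² + ∑_{k=k_γ(ε)+1}^∞ ρ_k² → 0` as `ε → 0⁺`. -/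
theorem stmt7 (ρ ν lam : ℕ → ℝ)
    (hρ : ∀ k, 0 < ρ k) (hν : ∀ k, 0 < ν k) (hlam : ∀ k, 0 < lam k)
    (hsum : Summable fun k => ρ k ^ 2)
    (kγ : ℝ → ℕ)
    (hkγ : ∀ ε > (0 : ℝ),
      (∑ k ∈ Finset.range (kγ ε), (ρ k ^ 2 + ε ^ 2 * ν k ^ 2 / lam k ^ 2) ≤ ∑' k, ρ k ^ 2) ∧
      (∀ m : ℕ,
        (∑ k ∈ Finset.range m, (ρ k ^ 2 + ε ^ 2 * ν k ^ 2 / lam k ^ 2) ≤ ∑' k, ρ k ^ 2) →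
        m ≤ kγ ε)) :
    Tendsto
      (fun ε => (∑ k ∈ Finset.range (kγ ε), ε ^ 2 * ν k ^ 2 / lam k ^ 2)
        + ∑' k : ℕ, ρ (kγ ε + k) ^ 2)
      (𝓝[>] (0 : ℝ)) (𝓝 0) :=
  stmt7_general ρ ν lam hρ hsum kγ hkγ
end

section
/- Probabilistic regularization (Theorem 2): Let {λ_k}, {ρ_k}, {ν_k} be positive sequences with Σ ρ_k² = Γ < ∞. For ε > 0 define I(ε) = { k : λ_k ρ_k ≥ ε ν_k } and N(ε) its complement, and assume I(ε) is finite for each ε > 0. Then lim_{ε→0} [ Σ_{k∈I(ε)} ε²ν_k²/λ_k² + Σ_{k∈N(ε)} ρ_k² ] = 0. -/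
/-!
For `ε > 0` the error is a single series `∑ₖ eₖ(ε)`, where `eₖ(ε)` is `ε²νₖ²/λₖ²` on the
informative set and `ρₖ²` off it. On the informative set `ε νₖ ≤ λₖ ρₖ` gives
`ε²νₖ²/λₖ² ≤ ρₖ²`, so every term is dominated by the summable `ρₖ²`; and each fixed `k`
is informative for all small `ε`, so `eₖ(ε) → 0`. Tannery's theorem (dominated
convergence for series) concludes.
-/

open Filter
open scoped Topology

theorem tsum_ite_eq_tsum_subtype_add_tsum_subtype {α G : Type*} [AddCommGroup G] [UniformSpace G]
    [IsUniformAddGroup G] [CompleteSpace G] [T2Space G] {p q : α → Prop} [DecidablePred p]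
    (hq : ∀ a, q a ↔ ¬p a) {f g : α → G} (h : Summable fun a => if p a then f a else g a) :
    ∑' a, (if p a then f a else g a) = ∑' a : {a // p a}, f a + ∑' a : {a // q a}, g a := by
  obtain rfl : q = fun a => ¬p a := funext fun a => propext (hq a)
  refine (h.tsum_subtype_add_tsum_subtype_compl {a | p a}).symm.trans ?_
  congr 1 <;> refine tsum_congr fun a => ?_
  · exact if_pos a.2
  · exact if_neg a.2

theorem sq_div_sq_le_sq_of_le_mul {K : Type*} [Field K] [LinearOrder K] [IsStrictOrderedRing K]
    {x b c : K} (hx : 0 ≤ x) (h : x ≤ b * c) :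
    x ^ 2 / b ^ 2 ≤ c ^ 2 := by
  have hsq : x ^ 2 ≤ c ^ 2 * b ^ 2 := by nlinarith
  exact div_le_of_le_mul₀ (sq_nonneg b) (sq_nonneg c) hsq

section MeanSquareError

variable {ι : Type*} (lam ρ ν : ι → ℝ)

noncomputable def mseTerm (ε : ℝ) (k : ι) : ℝ :=
  if ε * ν k ≤ lam k * ρ k then ε ^ 2 * ν k ^ 2 / lam k ^ 2 else ρ k ^ 2

variable {lam ρ ν}

theorem mseTerm_nonneg (ε : ℝ) (k : ι) : 0 ≤ mseTerm lam ρ ν ε k := by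
  unfold mseTerm
  split_ifs <;> positivity

theorem mseTerm_le {ε : ℝ} (hε : 0 < ε) {k : ι} (hν : 0 ≤ ν k) :
    mseTerm lam ρ ν ε k ≤ ρ k ^ 2 := by
  unfold mseTerm
  split_ifs with h
  · rw [← mul_pow]
    exact sq_div_sq_le_sq_of_le_mul (by positivity) h
  · exact le_rfl

theorem tendsto_mseTerm {k : ι} (hk : 0 < lam k * ρ k) :
    Tendsto (mseTerm lam ρ ν · k) (𝓝 0) (𝓝 0) := by
  have hinformative : ∀ᶠ ε in 𝓝 (0 : ℝ), ε * ν k ≤ lam k * ρ k := by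
    have hcont : Tendsto (· * ν k) (𝓝 (0 : ℝ)) (𝓝 0) := by
      simpa using (continuous_mul_const (ν k)).tendsto 0
    exact (hcont.eventually_lt_const hk).mono fun _ h => h.le
  have hlim : Tendsto (fun ε : ℝ => ε ^ 2 * ν k ^ 2 / lam k ^ 2) (𝓝 0) (𝓝 0) := by
    simpa using ((continuous_pow 2).tendsto (0 : ℝ)).mul_const (ν k ^ 2) |>.div_const (lam k ^ 2)
  refine hlim.congr' (hinformative.mono fun ε h => ?_)
  simp only [mseTerm, if_pos h]

theorem tendsto_tsum_mseTerm (hpos : ∀ k, 0 < lam k * ρ k) (hν : ∀ k, 0 ≤ ν k)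
    (hsum : Summable fun k => ρ k ^ 2) :
    Tendsto (fun ε => ∑' k, mseTerm lam ρ ν ε k) (𝓝[>] 0) (𝓝 0) := by
  have hdom : ∀ᶠ ε in 𝓝[>] (0 : ℝ), ∀ k, ‖mseTerm lam ρ ν ε k‖ ≤ ρ k ^ 2 := by
    filter_upwards [self_mem_nhdsWithin] with ε hε k
    rw [Real.norm_of_nonneg (mseTerm_nonneg ε k)]
    exact mseTerm_le hε (hν k)
  simpa using tendsto_tsum_of_dominated_convergence hsum
    (fun k => (tendsto_mseTerm (hpos k)).mono_left nhdsWithin_le_nhds) hdom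

theorem tsum_mseTerm {ε : ℝ} (hε : 0 < ε) (hν : ∀ k, 0 ≤ ν k)
    (hsum : Summable fun k => ρ k ^ 2) :
    ∑' k, mseTerm lam ρ ν ε k =
      (∑' k : {k // ε * ν k ≤ lam k * ρ k}, ε ^ 2 * ν k ^ 2 / lam k ^ 2)
        + ∑' k : {k // lam k * ρ k < ε * ν k}, ρ k ^ 2 := by
  have hsummable : Summable (mseTerm lam ρ ν ε) :=
    hsum.of_nonneg_of_le (mseTerm_nonneg ε) fun k => mseTerm_le hε (hν k)
  exact tsum_ite_eq_tsum_subtype_add_tsum_subtype (fun _ => not_le.symm) hsummable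

end MeanSquareError

theorem stmt9_general (lam ρ ν : ℕ → ℝ)
    (hlam : ∀ k, 0 < lam k) (hρ : ∀ k, 0 < ρ k) (hν : ∀ k, 0 < ν k)
    (hsum : Summable fun k => ρ k ^ 2) :
    Tendsto
      (fun ε =>
        (∑' k : {k : ℕ // ε * ν k ≤ lam k * ρ k}, ε ^ 2 * ν k ^ 2 / lam k ^ 2)
        + ∑' k : {k : ℕ // lam k * ρ k < ε * ν k}, ρ k ^ 2)
      (𝓝[>] (0 : ℝ)) (𝓝 0) := by
  have hν' : ∀ k, 0 ≤ ν k := fun k => (hν k).le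
  refine (tendsto_tsum_mseTerm (fun k => mul_pos (hlam k) (hρ k)) hν' hsum).congr' ?_
  filter_upwards [self_mem_nhdsWithin] with ε hε
  exact tsum_mseTerm hε hν' hsum

/-- Theorem 2, probabilistic regularization: with positive sequences
`λ_k, ρ_k, ν_k`, `∑ ρ_k² = Γ < ∞`, and the informative set
`I(ε) = { k : λ_k ρ_k ≥ ε ν_k }` finite for each `ε > 0`, the global mean-square error
`∑_{k∈I(ε)} ε²ν_k²/λ_k² + ∑_{k∈N(ε)} ρ_k²` tends to `0` as `ε → 0⁺`. -/
theorem stmt9 (lam ρ ν : ℕ → ℝ)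
    (hlam : ∀ k, 0 < lam k) (hρ : ∀ k, 0 < ρ k) (hν : ∀ k, 0 < ν k)
    (hsum : Summable fun k => ρ k ^ 2)
    (hfin : ∀ ε > (0 : ℝ), {k : ℕ | ε * ν k ≤ lam k * ρ k}.Finite) :
    Tendsto
      (fun ε =>
        (∑' k : {k : ℕ // ε * ν k ≤ lam k * ρ k}, ε ^ 2 * ν k ^ 2 / lam k ^ 2)
        + ∑' k : {k : ℕ // lam k * ρ k < ε * ν k}, ρ k ^ 2)
      (𝓝[>] (0 : ℝ)) (𝓝 0) :=
  stmt9_general lam ρ ν hlam hρ hν hsum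
end

section
/- Convergence of the Tikhonov regularized solution: Suppose f satisfies ‖Af − ḡ^ε‖ ≤ ε and Σ_k c_k²|f_k|² ≤ E² with c_k² → ∞. Let f⋆(ε) = Σ_k [λ_k ḡ^ε_k / (λ_k² + (ε/E)² c_k²)] ψ_k. Then ‖f − f⋆(ε)‖ → 0 as ε → 0 (E fixed). -/
/-!
With `x_k = ⟪f, ψ_k⟫`, `y_k = ⟪ḡ^ε, ψ_k⟫`, `α = (ε/E)²` and `D_k = λ_k² + α c_k²`, the `k`-th
coefficient of `f - f⋆(ε)` is `α c_k² x_k / D_k + (λ_k / D_k) (λ_k x_k - y_k)`.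
The bias part is dominated by `|x_k|` and vanishes coefficientwise as `α → 0`, so its `ℓ²` norm
tends to `0` by Tannery's theorem. The noise part has squared `ℓ²` norm at most
`ε² sup_k (λ_k / D_k)²`, and `ε² (λ_k / D_k)²` is at most `ε² / λ_k²`, small for the finitely many
`k` with `c_k` small, and at most `E² / (4 c_k²)` for all other `k`.
-/

open Filter
open scoped RealInnerProductSpace Topology

namespace HilbertBasis

variable {ι H : Type*} [NormedAddCommGroup H] [InnerProductSpace ℝ H]

theorem hasSum_sq_inner (b : HilbertBasis ι ℝ H) (x : H) :
    HasSum (fun i => ⟪x, b i⟫ ^ 2) (‖x‖ ^ 2) := by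
  simpa [real_inner_comm, real_inner_self_eq_norm_sq, sq] using b.hasSum_inner_mul_inner x x

theorem hasSum_sq_inner_sub_tsum [CompleteSpace H] (b : HilbertBasis ι ℝ H) (x : H) {a : ι → ℝ}
    (ha : Summable fun i => a i ^ 2) :
    HasSum (fun i => (⟪x, b i⟫ - a i) ^ 2) (‖x - ∑' i, a i • b i‖ ^ 2) := by
  have hmem : Memℓp a 2 := memℓp_gen (by simpa using ha)
  set y := b.repr.symm ⟨a, hmem⟩
  have hy : ∑' i, a i • b i = y := (b.hasSum_repr_symm ⟨a, hmem⟩).tsum_eq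
  have hcoef : ∀ i, ⟪y, b i⟫ = a i := fun i => by
    rw [real_inner_comm, ← b.repr_apply_apply]
    simp [y]
  simpa [hy, inner_sub_left, hcoef] using b.hasSum_sq_inner (x - y)

end HilbertBasis

section FilterFactor

variable {lam p q x y : ℝ}

theorem sq_mul_div_add_le_sq (hq : 0 < q) (hp : 0 ≤ p) : (p * x / (q + p)) ^ 2 ≤ x ^ 2 := by
  rw [div_pow, div_le_iff₀ (by positivity), mul_pow]
  nlinarith [mul_nonneg (mul_nonneg hp hq.le) (sq_nonneg x),
    mul_nonneg (sq_nonneg q) (sq_nonneg x)]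

theorem sq_div_sq_add_le_inv_sq (hlam : lam ≠ 0) (hp : 0 ≤ p) :
    (lam / (lam ^ 2 + p)) ^ 2 ≤ 1 / lam ^ 2 := by
  have hlam2 : 0 < lam ^ 2 := by positivity
  rw [div_pow, div_le_div_iff₀ (by positivity) hlam2]
  nlinarith [mul_nonneg hp hlam2.le, sq_nonneg p]

theorem sq_div_sq_add_le_inv_four_mul (hp : 0 < p) :
    (lam / (lam ^ 2 + p)) ^ 2 ≤ 1 / (4 * p) := by
  rw [div_pow, div_le_div_iff₀ (by positivity) (by positivity)]
  nlinarith [sq_nonneg (lam ^ 2 - p)]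

theorem sq_sub_tikhonov_le (hD : lam ^ 2 + p ≠ 0) :
    (x - lam * y / (lam ^ 2 + p)) ^ 2 ≤
      2 * (p * x / (lam ^ 2 + p)) ^ 2 + 2 * (lam / (lam ^ 2 + p)) ^ 2 * (lam * x - y) ^ 2 := by
  have hsplit : x - lam * y / (lam ^ 2 + p) =
      p * x / (lam ^ 2 + p) + lam / (lam ^ 2 + p) * (lam * x - y) := by
    field_simp
    ring
  rw [hsplit]
  nlinarith [sq_nonneg (p * x / (lam ^ 2 + p) - lam / (lam ^ 2 + p) * (lam * x - y))]

end FilterFactor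

theorem norm_sub_tikhonov_sq_le {ι H : Type*} [NormedAddCommGroup H] [InnerProductSpace ℝ H]
    [CompleteSpace H] (b : HilbertBasis ι ℝ H) {lam p : ι → ℝ} (hlam : ∀ i, lam i ≠ 0)
    (hp : ∀ i, 0 ≤ p i) {K : ℝ} (hK : ∀ i, (lam i / (lam i ^ 2 + p i)) ^ 2 ≤ K) {f h : H}
    (hh : ∀ i, ⟪h, b i⟫ = lam i * ⟪f, b i⟫) (g : H) :
    ‖f - ∑' i, (lam i * ⟪g, b i⟫ / (lam i ^ 2 + p i)) • b i‖ ^ 2 ≤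
      2 * ∑' i, (p i * ⟪f, b i⟫ / (lam i ^ 2 + p i)) ^ 2 + 2 * (K * ‖h - g‖ ^ 2) := by
  have hD : ∀ i, 0 < lam i ^ 2 + p i := fun i => by have := hlam i; have := hp i; positivity
  have hfilter : Summable fun i => (lam i * ⟪g, b i⟫ / (lam i ^ 2 + p i)) ^ 2 := by
    refine ((b.hasSum_sq_inner g).summable.mul_left K).of_nonneg_of_le (fun _ => sq_nonneg _)
      fun i => ?_
    rw [mul_div_right_comm, mul_pow]
    exact mul_le_mul_of_nonneg_right (hK i) (sq_nonneg _)
  have hbias : Summable fun i => (p i * ⟪f, b i⟫ / (lam i ^ 2 + p i)) ^ 2 :=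
    (b.hasSum_sq_inner f).summable.of_nonneg_of_le (fun _ => sq_nonneg _)
      fun i => sq_mul_div_add_le_sq (by have := hlam i; positivity) (hp i)
  have hnoise : HasSum (fun i => ⟪h - g, b i⟫ ^ 2) (‖h - g‖ ^ 2) := b.hasSum_sq_inner (h - g)
  have hnoiseSummable : Summable fun i => (lam i / (lam i ^ 2 + p i)) ^ 2 * ⟪h - g, b i⟫ ^ 2 :=
    (hnoise.summable.mul_left K).of_nonneg_of_le (fun _ => by positivity)
      fun i => mul_le_mul_of_nonneg_right (hK i) (sq_nonneg _)
  calc ‖f - ∑' i, (lam i * ⟪g, b i⟫ / (lam i ^ 2 + p i)) • b i‖ ^ 2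
      = ∑' i, (⟪f, b i⟫ - lam i * ⟪g, b i⟫ / (lam i ^ 2 + p i)) ^ 2 :=
        (b.hasSum_sq_inner_sub_tsum f hfilter).tsum_eq.symm
    _ ≤ ∑' i, (2 * (p i * ⟪f, b i⟫ / (lam i ^ 2 + p i)) ^ 2 +
          2 * ((lam i / (lam i ^ 2 + p i)) ^ 2 * ⟪h - g, b i⟫ ^ 2)) := by
        refine (b.hasSum_sq_inner_sub_tsum f hfilter).summable.tsum_le_tsum (fun i => ?_)
          ((hbias.mul_left 2).add (hnoiseSummable.mul_left 2))
        rw [inner_sub_left, hh, ← mul_assoc]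
        exact sq_sub_tikhonov_le (hD i).ne'
    _ ≤ 2 * ∑' i, (p i * ⟪f, b i⟫ / (lam i ^ 2 + p i)) ^ 2 + 2 * (K * ‖h - g‖ ^ 2) := by
        rw [(hbias.mul_left 2).tsum_add (hnoiseSummable.mul_left 2), tsum_mul_left, tsum_mul_left,
          ← hnoise.tsum_eq]
        gcongr
        exact (hnoiseSummable.tsum_le_tsum
          (fun i => mul_le_mul_of_nonneg_right (hK i) (sq_nonneg _))
          (hnoise.summable.mul_left K)).trans_eq tsum_mul_left

theorem tendsto_tsum_sq_tikhonov_bias {α : Type*} {l : Filter α} {t : α → ℝ}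
    (ht : Tendsto t l (𝓝 0)) (ht₀ : ∀ᶠ s in l, 0 ≤ t s) {lam : ℕ → ℝ} (hlam : ∀ k, lam k ≠ 0)
    (c : ℕ → ℝ) {x : ℕ → ℝ} (hx : Summable fun k => x k ^ 2) :
    Tendsto (fun s => ∑' k, (t s * c k ^ 2 * x k / (lam k ^ 2 + t s * c k ^ 2)) ^ 2) l (𝓝 0) := by
  have hlim : ∀ k, Tendsto (fun s => (t s * c k ^ 2 * x k / (lam k ^ 2 + t s * c k ^ 2)) ^ 2)
      l (𝓝 0) := fun k => by
    have hD : lam k ^ 2 + 0 * c k ^ 2 ≠ 0 := by have := hlam k; positivity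
    simpa using (((ht.mul_const _).mul_const _).div (tendsto_const_nhds.add (ht.mul_const _))
      hD).pow 2
  simpa using tendsto_tsum_of_dominated_convergence hx hlim <| ht₀.mono fun s hs k => by
    rw [Real.norm_of_nonneg (sq_nonneg _)]
    exact sq_mul_div_add_le_sq (by have := hlam k; positivity) (by positivity)

theorem eventually_forall_sq_mul_tikhonov_gain_le {lam c : ℕ → ℝ} (hlam : ∀ k, lam k ≠ 0)
    (hc : Tendsto (fun k => c k ^ 2) atTop atTop) {E : ℝ} (hE : E ≠ 0) {η : ℝ} (hη : 0 < η) :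
    ∀ᶠ ε in 𝓝[>] (0 : ℝ), ∀ k,
      ε ^ 2 * (lam k / (lam k ^ 2 + (ε / E) ^ 2 * c k ^ 2)) ^ 2 ≤ η := by
  obtain ⟨N, hN⟩ := eventually_atTop.mp (hc.eventually_gt_atTop (E ^ 2 / (4 * η)))
  have hhead : ∀ᶠ ε in 𝓝 (0 : ℝ), ∀ k ∈ Finset.range N, ε ^ 2 * (1 / lam k ^ 2) ≤ η :=
    (eventually_all_finset _).2 fun k _ =>
      (((continuous_pow 2).mul continuous_const).tendsto' 0 0 (by simp)).eventually
        (eventually_le_nhds hη)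
  filter_upwards [self_mem_nhdsWithin, eventually_nhdsWithin_of_eventually_nhds hhead]
    with ε hε hεN k
  rcases lt_or_ge k N with hk | hk
  · exact (mul_le_mul_of_nonneg_left (sq_div_sq_add_le_inv_sq (hlam k) (by positivity))
      (sq_nonneg ε)).trans (hεN k (Finset.mem_range.2 hk))
  · have hck := hN k hk
    have hc2 : 0 < c k ^ 2 := lt_of_le_of_lt (by positivity) hck
    have hε0 : ε ≠ 0 := (Set.mem_Ioi.mp hε).ne'
    calc ε ^ 2 * (lam k / (lam k ^ 2 + (ε / E) ^ 2 * c k ^ 2)) ^ 2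
        ≤ ε ^ 2 * (1 / (4 * ((ε / E) ^ 2 * c k ^ 2))) :=
          mul_le_mul_of_nonneg_left (sq_div_sq_add_le_inv_four_mul (by positivity)) (sq_nonneg ε)
      _ = E ^ 2 / (4 * c k ^ 2) := by field_simp
      _ ≤ η := by
          rw [div_lt_iff₀ (by positivity)] at hck
          rw [div_le_iff₀ (by positivity)]
          linarith

theorem stmt17_general {H : Type*} [NormedAddCommGroup H] [InnerProductSpace ℝ H] [CompleteSpace H]
    (b : HilbertBasis ℕ ℝ H) (A : H →L[ℝ] H)
    (hA_sa : IsSelfAdjoint A)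
    (lam : ℕ → ℝ) (hlam : ∀ k, 0 < lam k)
    (heig : ∀ k, A (b k) = lam k • b k)
    (c : ℕ → ℝ)
    (hc_inf : Tendsto (fun k => c k ^ 2) atTop atTop)
    (E : ℝ) (hE : 0 < E)
    (f : H) (gbar : ℝ → H)
    (hnoise : ∀ ε > (0 : ℝ), ‖A f - gbar ε‖ ≤ ε)
    (fstar : ℝ → H)
    (hfstar : ∀ ε > (0 : ℝ), fstar ε = ∑' k : ℕ,
      (lam k * ⟪gbar ε, b k⟫ / (lam k ^ 2 + (ε / E) ^ 2 * c k ^ 2)) • b k) :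
    Tendsto (fun ε => ‖f - fstar ε‖) (𝓝[>] (0 : ℝ)) (𝓝 0) := by
  have hlam' : ∀ k, lam k ≠ 0 := fun k => (hlam k).ne'
  have hAf : ∀ k, ⟪A f, b k⟫ = lam k * ⟪f, b k⟫ := fun k =>
    (hA_sa.isSymmetric f (b k)).trans <| by
      rw [ContinuousLinearMap.coe_coe, heig k, real_inner_smul_right]
  have hα : Tendsto (fun ε : ℝ => (ε / E) ^ 2) (𝓝[>] 0) (𝓝 0) :=
    tendsto_nhdsWithin_of_tendsto_nhds <|
      ((continuous_id.div_const E).pow 2).tendsto' 0 0 (by simp)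
  have hbias := tendsto_tsum_sq_tikhonov_bias hα (.of_forall fun _ => sq_nonneg _) hlam' c
    (b.hasSum_sq_inner f).summable
  rw [Metric.tendsto_nhds]
  intro η hη
  have hη8 : 0 < η ^ 2 / 8 := by positivity
  filter_upwards [self_mem_nhdsWithin, hbias.eventually (eventually_le_nhds hη8),
    eventually_forall_sq_mul_tikhonov_gain_le hlam' hc_inf hE.ne' hη8] with ε hε hbiasε hgain
  have hε : 0 < ε := hε
  have hK : ∀ k, (lam k / (lam k ^ 2 + (ε / E) ^ 2 * c k ^ 2)) ^ 2 ≤ η ^ 2 / 8 / ε ^ 2 :=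
    fun k => by rw [le_div_iff₀ (by positivity), mul_comm]; exact hgain k
  have hest := norm_sub_tikhonov_sq_le b hlam' (fun k => by positivity) hK hAf (gbar ε)
  rw [← hfstar ε hε] at hest
  have hnoise2 : ‖A f - gbar ε‖ ^ 2 ≤ ε ^ 2 := pow_le_pow_left₀ (norm_nonneg _) (hnoise ε hε) 2
  have hsq : ‖f - fstar ε‖ ^ 2 < η ^ 2 := by
    have : η ^ 2 / 8 / ε ^ 2 * ‖A f - gbar ε‖ ^ 2 ≤ η ^ 2 / 8 := by
      calc _ ≤ η ^ 2 / 8 / ε ^ 2 * ε ^ 2 := by gcongr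
        _ = η ^ 2 / 8 := by field_simp
    linarith
  rw [Real.dist_eq, sub_zero, abs_norm]
  exact lt_of_pow_lt_pow_left₀ 2 hη.le hsq

/-- Proposition 3: convergence of the Tikhonov regularized solution.
Under `‖Af − ḡ^ε‖ ≤ ε` and the a priori bound `∑ c_k² f_k² ≤ E²` with `c_k² → ∞`,
the regularized solution `f⋆(ε) = ∑_k (λ_k ḡ^ε_k/(λ_k² + (ε/E)² c_k²)) ψ_k`
converges to `f` in norm as `ε → 0⁺` (`E` fixed). -/
theorem stmt17 {H : Type*} [NormedAddCommGroup H] [InnerProductSpace ℝ H] [CompleteSpace H]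
    (b : HilbertBasis ℕ ℝ H) (A : H →L[ℝ] H)
    (hA_compact : IsCompactOperator A) (hA_sa : IsSelfAdjoint A)
    (hA_inj : Function.Injective A)
    (lam : ℕ → ℝ) (hlam : ∀ k, 0 < lam k)
    (heig : ∀ k, A (b k) = lam k • b k)
    (c : ℕ → ℝ) (hc : ∀ k, 0 < c k)
    (hc_inf : Tendsto (fun k => c k ^ 2) atTop atTop)
    (E : ℝ) (hE : 0 < E)
    (f : H) (gbar : ℝ → H)
    (hnoise : ∀ ε > (0 : ℝ), ‖A f - gbar ε‖ ≤ ε)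
    (hbound : ∑' k : ℕ, c k ^ 2 * ⟪f, b k⟫ ^ 2 ≤ E ^ 2)
    (hbound' : Summable fun k => c k ^ 2 * ⟪f, b k⟫ ^ 2)
    (fstar : ℝ → H)
    (hfstar : ∀ ε > (0 : ℝ), fstar ε = ∑' k : ℕ,
      (lam k * ⟪gbar ε, b k⟫ / (lam k ^ 2 + (ε / E) ^ 2 * c k ^ 2)) • b k) :
    Tendsto (fun ε => ‖f - fstar ε‖) (𝓝[>] (0 : ℝ)) (𝓝 0) :=
  stmt17_general b A hA_sa lam hlam heig c hc_inf E hE f gbar hnoise fstar hfstar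
end

section
/- Convergence of truncated variational approximation: Under the assumptions ‖Af − ḡ^ε‖ ≤ ε and Σ_k c_k²|f_k|² ≤ E² (c_k > 0, c_k → ∞, λ_k > 0 strictly decreasing to 0), define k_α(ε) as the largest integer k such that λ_k ≥ (ε/E)|c_k|, and f⋆¹(ε) = Σ_{k=1}^{k_α(ε)} (ḡ^ε_k/λ_k) ψ_k. Then ‖f − f⋆¹(ε)‖ → 0 as ε → 0 (E fixed). -/
/-!
Write `P_N f = ∑_{k<N} ⟪f, ψ_k⟫ ψ_k` and `N = k_α(ε)`. The error splits as
`f - f⋆¹(ε) = (f - P_N f) + ∑_{k<N} (⟪Af - ḡ^ε, ψ_k⟫ / λ_k) ψ_k`.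
The first term tends to `0` because `N → ∞` as `ε → 0`. By Bessel's inequality and the
monotonicity of `λ`, the second has norm at most `ε / λ_{N-1}`, and the choice of `N` gives
`ε / λ_{N-1} ≤ E / c_{N-1} → 0`.
-/

open Filter
open scoped RealInnerProductSpace Topology

section

variable {H : Type*} [NormedAddCommGroup H] [InnerProductSpace ℝ H]

theorem HilbertBasis.tendsto_norm_sub_sum_range_inner_smul (b : HilbertBasis ℕ ℝ H) (f : H) :
    Tendsto (fun N => ‖f - ∑ k ∈ Finset.range N, ⟪f, b k⟫ • b k‖) atTop (𝓝 0) := by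
  have hsum : HasSum (fun k => ⟪f, b k⟫ • b k) f := by
    simpa only [b.repr_apply_apply, real_inner_comm] using b.hasSum_repr f
  simpa using ((tendsto_const_nhds (x := f)).sub hsum.tendsto_sum_nat).norm

theorem LinearMap.IsSymmetric.inner_sub_div_eigenvalue {A : H →ₗ[ℝ] H} (hA : A.IsSymmetric)
    {v : H} {μ : ℝ} (hv : A v = μ • v) (hμ : μ ≠ 0) (f g : H) :
    ⟪f, v⟫ - ⟪g, v⟫ / μ = ⟪A f - g, v⟫ / μ := by
  rw [inner_sub_left, hA, hv, real_inner_smul_right]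
  field_simp

theorem Orthonormal.norm_sum_inner_div_smul_le {ι : Type*} {v : ι → H} (hv : Orthonormal ℝ v)
    (s : Finset ι) (x : H) {μ : ι → ℝ} {m : ℝ} (hm : 0 < m) (hmμ : ∀ k ∈ s, m ≤ μ k) :
    ‖∑ k ∈ s, (⟪x, v k⟫ / μ k) • v k‖ ≤ ‖x‖ / m := by
  refine le_of_pow_le_pow_left₀ two_ne_zero (by positivity) ?_
  have hbessel : ∑ k ∈ s, ⟪x, v k⟫ ^ 2 ≤ ‖x‖ ^ 2 := by
    simpa only [real_inner_comm, Real.norm_eq_abs, sq_abs] using hv.sum_inner_products_le x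
  calc ‖∑ k ∈ s, (⟪x, v k⟫ / μ k) • v k‖ ^ 2
      = ∑ k ∈ s, (⟪x, v k⟫ / μ k) ^ 2 := by
        rw [← real_inner_self_eq_norm_sq, hv.inner_sum]
        simp only [conj_trivial, sq]
    _ ≤ ∑ k ∈ s, ⟪x, v k⟫ ^ 2 / m ^ 2 := by
        refine Finset.sum_le_sum fun k hk => ?_
        rw [div_pow]
        gcongr
        exact hmμ k hk
    _ ≤ (‖x‖ / m) ^ 2 := by
        rw [← Finset.sum_div, div_pow]
        gcongr

theorem Orthonormal.norm_sub_sum_range_inner_div_smul_le {A : H →ₗ[ℝ] H} (hA : A.IsSymmetric)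
    {v : ℕ → H} (hv : Orthonormal ℝ v) {lam : ℕ → ℝ} (hlam : ∀ k, 0 < lam k)
    (hdec : Antitone lam) (heig : ∀ k, A (v k) = lam k • v k) (f g : H) {N : ℕ} (hN : 1 ≤ N) :
    ‖f - ∑ k ∈ Finset.range N, (⟪g, v k⟫ / lam k) • v k‖
      ≤ ‖f - ∑ k ∈ Finset.range N, ⟪f, v k⟫ • v k‖ + ‖A f - g‖ / lam (N - 1) := by
  have hsplit : f - ∑ k ∈ Finset.range N, (⟪g, v k⟫ / lam k) • v k
      = (f - ∑ k ∈ Finset.range N, ⟪f, v k⟫ • v k)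
        + ∑ k ∈ Finset.range N, (⟪A f - g, v k⟫ / lam k) • v k := by
    simp only [← hA.inner_sub_div_eigenvalue (heig _) (hlam _).ne', sub_smul,
      Finset.sum_sub_distrib]
    abel
  have hdata : ‖∑ k ∈ Finset.range N, (⟪A f - g, v k⟫ / lam k) • v k‖ ≤ ‖A f - g‖ / lam (N - 1) :=
    hv.norm_sum_inner_div_smul_le _ _ (hlam _) fun k hk =>
      hdec (by simp only [Finset.mem_range] at hk; omega)
  rw [hsplit]
  exact (norm_add_le _ _).trans (add_le_add_right hdata _)

end

theorem tendsto_truncation_index_atTop {lam c : ℕ → ℝ} (hlam : ∀ k, 0 < lam k)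
    (hc : ∀ k, 0 < c k) {E : ℝ} (hE : 0 < E) {kα : ℝ → ℕ}
    (hkα : ∀ ε > (0 : ℝ), ∀ k : ℕ, (ε / E) * c k ≤ lam k → k < kα ε) :
    Tendsto kα (𝓝[>] (0 : ℝ)) atTop := by
  refine tendsto_atTop.2 fun M => ?_
  have hδ : (0 : ℝ) < E * lam M / c M := div_pos (mul_pos hE (hlam M)) (hc M)
  filter_upwards [Ioo_mem_nhdsGT hδ] with ε ⟨hε, hεδ⟩
  refine (hkα ε hε M ?_).le
  rw [div_mul_eq_mul_div, div_le_iff₀ hE]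
  rw [lt_div_iff₀ (hc M)] at hεδ
  linarith

theorem div_le_div_of_div_mul_le {ε E c l : ℝ} (hε : 0 < ε) (hE : 0 < E) (hc : 0 < c)
    (h : (ε / E) * c ≤ l) : ε / l ≤ E / c := by
  have hl : 0 < l := lt_of_lt_of_le (by positivity) h
  rw [div_le_div_iff₀ hl hc]
  rw [div_mul_eq_mul_div, div_le_iff₀ hE] at h
  linarith

theorem stmt18_general {H : Type*} [NormedAddCommGroup H] [InnerProductSpace ℝ H] [CompleteSpace H]
    (b : HilbertBasis ℕ ℝ H) (A : H →L[ℝ] H)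
    (hA_sa : IsSelfAdjoint A)
    (lam : ℕ → ℝ) (hlam : ∀ k, 0 < lam k)
    (hdec : StrictAnti lam)
    (heig : ∀ k, A (b k) = lam k • b k)
    (c : ℕ → ℝ) (hc : ∀ k, 0 < c k)
    (hc_inf : Tendsto c atTop atTop)
    (E : ℝ) (hE : 0 < E)
    (f : H) (gbar : ℝ → H)
    (hnoise : ∀ ε > (0 : ℝ), ‖A f - gbar ε‖ ≤ ε)
    (kα : ℝ → ℕ)
    (hkα₁ : ∀ ε > (0 : ℝ), ∀ k : ℕ, (ε / E) * c k ≤ lam k → k < kα ε)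
    (hkα₂ : ∀ ε > (0 : ℝ), kα ε = 0 ∨ (ε / E) * c (kα ε - 1) ≤ lam (kα ε - 1)) :
    Tendsto
      (fun ε => ‖f - ∑ k ∈ Finset.range (kα ε), (⟪gbar ε, b k⟫ / lam k) • b k‖)
      (𝓝[>] (0 : ℝ)) (𝓝 0) := by
  have hsym := ContinuousLinearMap.isSelfAdjoint_iff_isSymmetric.mp hA_sa
  have hkα_inf := tendsto_truncation_index_atTop hlam hc hE hkα₁
  have hbias := (b.tendsto_norm_sub_sum_range_inner_smul f).comp hkα_inf
  have hE_div_c : Tendsto (fun ε => E / c (kα ε - 1)) (𝓝[>] (0 : ℝ)) (𝓝 0) :=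
    (hc_inf.comp ((tendsto_sub_atTop_nat 1).comp hkα_inf)).const_div_atTop E
  refine squeeze_zero' (Eventually.of_forall fun _ => norm_nonneg _) ?_
    (by simpa using hbias.add hE_div_c)
  filter_upwards [self_mem_nhdsWithin, hkα_inf.eventually_ge_atTop 1] with ε (hε : 0 < ε) hN
  calc _ ≤ ‖f - ∑ k ∈ Finset.range (kα ε), ⟪f, b k⟫ • b k‖ + ‖A f - gbar ε‖ / lam (kα ε - 1) :=
        b.orthonormal.norm_sub_sum_range_inner_div_smul_le hsym hlam hdec.antitone heig _ _ hN
    _ ≤ ‖f - ∑ k ∈ Finset.range (kα ε), ⟪f, b k⟫ • b k‖ + ε / lam (kα ε - 1) := by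
        gcongr
        · exact (hlam _).le
        · exact hnoise ε hε
    _ ≤ ‖f - ∑ k ∈ Finset.range (kα ε), ⟪f, b k⟫ • b k‖ + E / c (kα ε - 1) :=
        add_le_add_right (div_le_div_of_div_mul_le hε hE (hc _)
          ((hkα₂ ε hε).resolve_left (by omega))) _

/-- Proposition 4: convergence of the truncated variational approximation
`f⋆¹(ε) = ∑_{k=1}^{k_α(ε)} (ḡ^ε_k/λ_k) ψ_k`, where `k_α(ε)` is the largest index `k`
with `λ_k ≥ (ε/E) c_k`.  Here `hkα₁` says every index satisfying the condition lies below
the truncation point, and `hkα₂` says the last retained index satisfies it. -/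
theorem stmt18 {H : Type*} [NormedAddCommGroup H] [InnerProductSpace ℝ H] [CompleteSpace H]
    (b : HilbertBasis ℕ ℝ H) (A : H →L[ℝ] H)
    (hA_compact : IsCompactOperator A) (hA_sa : IsSelfAdjoint A)
    (hA_inj : Function.Injective A)
    (lam : ℕ → ℝ) (hlam : ∀ k, 0 < lam k)
    (hdec : StrictAnti lam) (hlam0 : Tendsto lam atTop (𝓝 0))
    (heig : ∀ k, A (b k) = lam k • b k)
    (c : ℕ → ℝ) (hc : ∀ k, 0 < c k)
    (hc_inf : Tendsto c atTop atTop)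
    (E : ℝ) (hE : 0 < E)
    (f : H) (gbar : ℝ → H)
    (hnoise : ∀ ε > (0 : ℝ), ‖A f - gbar ε‖ ≤ ε)
    (hbound : ∑' k : ℕ, c k ^ 2 * ⟪f, b k⟫ ^ 2 ≤ E ^ 2)
    (hbound' : Summable fun k => c k ^ 2 * ⟪f, b k⟫ ^ 2)
    (kα : ℝ → ℕ)
    (hkα₁ : ∀ ε > (0 : ℝ), ∀ k : ℕ, (ε / E) * c k ≤ lam k → k < kα ε)
    (hkα₂ : ∀ ε > (0 : ℝ), kα ε = 0 ∨ (ε / E) * c (kα ε - 1) ≤ lam (kα ε - 1)) :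
    Tendsto
      (fun ε => ‖f - ∑ k ∈ Finset.range (kα ε), (⟪gbar ε, b k⟫ / lam k) • b k‖)
      (𝓝[>] (0 : ℝ)) (𝓝 0) :=
  stmt18_general b A hA_sa lam hlam hdec heig c hc hc_inf E hE f gbar hnoise kα hkα₁ hkα₂
end
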